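/- arXiv:1005.1371 — 7 statements merged into one kernel-verified Lean document; each statement's English description precedes it below -/
import Mathlib

section
/- Let A be an associative algebra over a field containing q with q + q^{-1} invertible, and let E_i, E_j, E_k be elements satisfying the quantum Serre relations E_i E_j^2 - (q+q^{-1}) E_j E_i E_j + E_j^2 E_i = 0 and E_k E_j^2 - (q+q^{-1}) E_j E_k E_j + E_j^2 E_k = 0, and suppose E_i E_k = E_k E_i. Then [[[E_i, E_j]_q, E_k]_q, E_j] = 0, i.e. the element [[E_i,E_j]_q, E_k]_q commutes with E_j. (Here [X,Y]_q = XY - qYX and [X,Y] = XY - YX.) -/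
/-- Under the quantum Serre relations for `E_i, E_j` and `E_k, E_j`
and commutation of `E_i` with `E_k`, the element `[[E_i,E_j]_q, E_k]_q` commutes
with `E_j`.  Here `[X,Y]_q := XY - q YX`. -/
theorem qSerre_ijkj_commute {K : Type*} [Field K] {S : Type*} [Ring S] [Algebra K S]
    (q : K) (hq : q ≠ 0) (hq2 : q + q⁻¹ ≠ 0) (Ei Ej Ek : S)
    (hSi : Ei * Ej * Ej - (q + q⁻¹) • (Ej * Ei * Ej) + Ej * Ej * Ei = 0)
    (hSk : Ek * Ej * Ej - (q + q⁻¹) • (Ej * Ek * Ej) + Ej * Ej * Ek = 0)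
    (hik : Ei * Ek = Ek * Ei) :
    ((Ei * Ej - q • (Ej * Ei)) * Ek - q • (Ek * (Ei * Ej - q • (Ej * Ei)))) * Ej -
      Ej * ((Ei * Ej - q • (Ej * Ei)) * Ek - q • (Ek * (Ei * Ej - q • (Ej * Ei)))) = 0 := by
  have hD : Ei * Ek - Ek * Ei = 0 := by rw [hik, sub_self]
  have key : (q + q⁻¹) •
      (((Ei * Ej - q • (Ej * Ei)) * Ek - q • (Ek * (Ei * Ej - q • (Ej * Ei)))) * Ej -
        Ej * ((Ei * Ej - q • (Ej * Ei)) * Ek - q • (Ek * (Ei * Ej - q • (Ej * Ei)))))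
      = (Ei * Ej * Ej - (q + q⁻¹) • (Ej * Ei * Ej) + Ej * Ej * Ei) * Ek
        - (q ^ 2) • (Ek * (Ei * Ej * Ej - (q + q⁻¹) • (Ej * Ei * Ej) + Ej * Ej * Ei))
        + ((q ^ 2) • ((Ek * Ej * Ej - (q + q⁻¹) • (Ej * Ek * Ej) + Ej * Ej * Ek) * Ei)
          - Ei * (Ek * Ej * Ej - (q + q⁻¹) • (Ej * Ek * Ej) + Ej * Ej * Ek))
        + ((Ei * Ek - Ek * Ei) * (Ej * Ej)
          - (1 + q ^ 2) • (Ej * ((Ei * Ek - Ek * Ei) * Ej))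
          + (q ^ 2) • (Ej * (Ej * (Ei * Ek - Ek * Ei)))) := by
    simp only [smul_sub, smul_add, smul_smul, mul_add, add_mul, mul_sub, sub_mul,
      smul_mul_assoc, mul_smul_comm, mul_assoc]
    match_scalars <;> field_simp <;> ring
  have h0 : (q + q⁻¹) •
      (((Ei * Ej - q • (Ej * Ei)) * Ek - q • (Ek * (Ei * Ej - q • (Ej * Ei)))) * Ej -
        Ej * ((Ei * Ej - q • (Ej * Ei)) * Ek - q • (Ek * (Ei * Ej - q • (Ej * Ei))))) = 0 := by
    rw [key, hSi, hSk, hD]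
    simp
  have h1 := congrArg (fun z : S => (q + q⁻¹)⁻¹ • z) h0
  simpa [inv_smul_smul₀ hq2] using h1
end

section
/- Let A be an associative algebra over a field containing q with q + q^{-1} invertible, and let E_i, E_j, E_k be elements satisfying the quantum Serre relations E_i E_j^2 - (q+q^{-1}) E_j E_i E_j + E_j^2 E_i = 0 and E_k E_j^2 - (q+q^{-1}) E_j E_k E_j + E_j^2 E_k = 0, with E_i E_k = E_k E_i. Then [E_i, E_j]_q commutes with [E_k, E_j]_q, where [X,Y]_q = XY - qYX. -/
/-- Under the quantum Serre relations for `E_i, E_j` and `E_k, E_j`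
and commutation of `E_i` with `E_k`, `[E_i,E_j]_q` commutes with `[E_k,E_j]_q`,
where `[X,Y]_q := XY - q YX`. -/
theorem qSerre_brackets_commute {K : Type*} [Field K] {S : Type*} [Ring S] [Algebra K S]
    (q : K) (hq : q ≠ 0) (hq2 : q + q⁻¹ ≠ 0) (Ei Ej Ek : S)
    (hSi : Ei * Ej * Ej - (q + q⁻¹) • (Ej * Ei * Ej) + Ej * Ej * Ei = 0)
    (hSk : Ek * Ej * Ej - (q + q⁻¹) • (Ej * Ek * Ej) + Ej * Ej * Ek = 0)
    (hik : Ei * Ek = Ek * Ei) :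
    (Ei * Ej - q • (Ej * Ei)) * (Ek * Ej - q • (Ej * Ek)) =
      (Ek * Ej - q • (Ej * Ek)) * (Ei * Ej - q • (Ej * Ei)) := by
  set c := q + q⁻¹ with hc
  have hqc : q * c = q ^ 2 + 1 := by
    rw [hc, mul_add, mul_inv_cancel₀ hq]; ring
  have w0 : Ei * Ek - Ek * Ei = 0 := sub_eq_zero.mpr hik
  -- D := X*Y - Y*X, T := the bracket of middle monomials
  have key1 : (Ei * Ej - q • (Ej * Ei)) * (Ek * Ej - q • (Ej * Ek)) -
        (Ek * Ej - q • (Ej * Ek)) * (Ei * Ej - q • (Ej * Ei)) -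
        (Ei * Ej * Ek * Ej - Ek * Ej * Ei * Ej - Ej * Ei * Ej * Ek + Ej * Ek * Ej * Ei)
      = (-q) • ((Ei * Ej * Ej - c • (Ej * Ei * Ej) + Ej * Ej * Ei) * Ek)
        + q • ((Ek * Ej * Ej - c • (Ej * Ek * Ej) + Ej * Ej * Ek) * Ei)
        - q • (Ej * (Ei * Ek - Ek * Ei) * Ej)
        + q • (Ej * Ej * (Ei * Ek - Ek * Ei))
        + ((q ^ 2 + 1) - q * c) • (Ej * Ei * Ej * Ek - Ej * Ek * Ej * Ei) := by
    simp only [mul_sub, sub_mul, mul_add, add_mul, smul_mul_assoc, mul_smul_comm,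
      smul_sub, smul_add, smul_smul, sub_smul, add_smul, neg_smul, mul_assoc]
    module
  have key2 : (Ei * Ej - q • (Ej * Ei)) * (Ek * Ej - q • (Ej * Ek)) -
        (Ek * Ej - q • (Ej * Ek)) * (Ei * Ej - q • (Ej * Ei)) +
        (q ^ 2) • (Ei * Ej * Ek * Ej - Ek * Ej * Ei * Ej - Ej * Ei * Ej * Ek + Ej * Ek * Ej * Ei)
      = (-q) • (Ei * (Ek * Ej * Ej - c • (Ej * Ek * Ej) + Ej * Ej * Ek))
        + q • (Ek * (Ei * Ej * Ej - c • (Ej * Ei * Ej) + Ej * Ej * Ei))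
        + ((1 + q ^ 2) - q * c) • (Ei * Ej * Ek * Ej - Ek * Ej * Ei * Ej)
        - q • (Ej * (Ei * Ek - Ek * Ei) * Ej)
        + q • ((Ei * Ek - Ek * Ei) * (Ej * Ej)) := by
    simp only [mul_sub, sub_mul, mul_add, add_mul, smul_mul_assoc, mul_smul_comm,
      smul_sub, smul_add, smul_smul, sub_smul, add_smul, neg_smul, mul_assoc]
    module
  rw [hSi, hSk, w0, hqc] at key1 key2
  simp only [mul_zero, zero_mul, smul_zero, sub_self, zero_smul, add_zero, sub_zero,
    neg_zero, zero_add] at key1 key2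
  rw [show (1 + q ^ 2 - (q ^ 2 + 1) : K) = 0 by ring, zero_smul] at key2
  -- key1 : D - T = 0, key2 : D + q^2 • T = 0
  have hT : (q ^ 2 + 1) •
      (Ei * Ej * Ek * Ej - Ek * Ej * Ei * Ej - Ej * Ei * Ej * Ek + Ej * Ek * Ej * Ei) = 0 := by
    have h : (q ^ 2 + 1) •
        (Ei * Ej * Ek * Ej - Ek * Ej * Ei * Ej - Ej * Ei * Ej * Ek + Ej * Ek * Ej * Ei)
        = ((Ei * Ej - q • (Ej * Ei)) * (Ek * Ej - q • (Ej * Ek)) -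
            (Ek * Ej - q • (Ej * Ek)) * (Ei * Ej - q • (Ej * Ei)) +
            (q ^ 2) • (Ei * Ej * Ek * Ej - Ek * Ej * Ei * Ej - Ej * Ei * Ej * Ek + Ej * Ek * Ej * Ei))
          - ((Ei * Ej - q • (Ej * Ei)) * (Ek * Ej - q • (Ej * Ek)) -
            (Ek * Ej - q • (Ej * Ek)) * (Ei * Ej - q • (Ej * Ei)) -
            (Ei * Ej * Ek * Ej - Ek * Ej * Ei * Ej - Ej * Ei * Ej * Ek + Ej * Ek * Ej * Ei)) := by
      module
    rw [h, key1, key2, sub_zero]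
  have hqne : (q ^ 2 + 1 : K) ≠ 0 := by
    rw [← hqc]; exact mul_ne_zero hq hq2
  have hT0 : Ei * Ej * Ek * Ej - Ek * Ej * Ei * Ej - Ej * Ei * Ej * Ek + Ej * Ek * Ej * Ei = 0 :=
    (smul_eq_zero.mp hT).resolve_left hqne
  rw [hT0, sub_zero] at key1
  exact sub_eq_zero.mp key1
end

section
/- In U_q(sl(n+1)) (the Drinfeld–Jimbo quantum group of type A_n), define X_j = [[E_1, E_2]_q, ..., E_j]_q as the iterated q-bracket of the positive Chevalley generators E_1, ..., E_j, where [X,Y]_q = XY - qYX. Then for all integers j, k with j + k ≤ n, one has [X_j, X_{j+k}]_{q^{-1}} = X_j X_{j+k} - q^{-1} X_{j+k} X_j = 0. -/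
/-- The parameter `q` of the quantum group, an indeterminate over `ℚ`. -/
noncomputable def q : RatFunc ℚ := RatFunc.X

lemma q_ne : (q : RatFunc ℚ) ≠ 0 := RatFunc.X_ne_zero

lemma q2_ne : (1 + q^2 : RatFunc ℚ) ≠ 0 := by
  have h : (1 + q^2 : RatFunc ℚ) = algebraMap (Polynomial ℚ) (RatFunc ℚ) (1 + Polynomial.X^2) := by
    simp [q, RatFunc.algebraMap_X]
  rw [h]
  apply RatFunc.algebraMap_ne_zero
  intro hp
  have := congrArg (Polynomial.eval 0) hp
  simp at this

set_option maxHeartbeats 2000000 in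
/-- The key step: if `x` commutes with `f`, the pair `(e,f)` satisfies the (q-scaled)
Serre relation, and the pair `(x,e)` satisfies the (q-scaled) Serre relation, then the
pair `([x,e]_q, f)` satisfies the (q-scaled) Serre relation, up to the factor `1 + t²`. -/
lemma key_serre_gen {K A : Type*} [CommRing K] [Ring A] [Algebra K A] (t : K) (x e f : A)
    (hc : x * f = f * x)
    (hs1 : t • (e*e*f) - (t^2+1) • (e*f*e) + t • (f*e*e) = 0)
    (hs3 : t • (x*x*e) - (t^2+1) • (x*e*x) + t • (e*x*x) = 0) :
    (1 + t^2) •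
      (t • ((x*e - t•(e*x))*(x*e - t•(e*x))*f) - (t^2+1) • ((x*e - t•(e*x))*f*(x*e - t•(e*x)))
        + t • (f*(x*e - t•(e*x))*(x*e - t•(e*x)))) = 0 := by
  linear_combination (norm := skip)
    (t^2+t^4) • (hc * (e*e*x))
    - t^2 • (hc * (x*e*e))
    - (t^2+2*t^4+t^6) • (e * hc * (e*x))
    + (t^3+t^5) • (e * hc * (x*e))
    + t^4 • ((e*e) * hc * x)
    + t^4 • ((e*e*x) * hc)
    - (t+t^3) • ((e*x) * hc * e)
    - t^2 • (x * hc * (e*e))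
    + (1+2*t^2+t^4) • ((x*e) * hc * e)
    - (t^2+t^4) • ((x*e*e) * hc)
    + t^3 • (hs1 * (x*x))
    - (t+t^3) • (x * hs1 * x)
    + t • ((x*x) * hs1)
    - t • (hs3 * (e*f))
    + (1+t^2) • (hs3 * (f*e))
    - t^3 • (e * hs3 * f)
    + (t^2+t^4) • ((e*f) * hs3)
    - t • (f * hs3 * e)
    - t^3 • ((f*e) * hs3)
  simp only [smul_sub, smul_add, smul_neg, smul_smul, sub_mul,
    mul_sub, add_mul, mul_add, neg_mul, mul_neg, smul_mul_assoc, mul_smul_comm,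
    sub_eq_add_neg, mul_assoc, smul_zero, zero_mul, mul_zero, add_zero, zero_add]
  match_scalars
  all_goals ring

/-- If `x` commutes with `m` and `e` commutes with `m`, then `[x,e]_t` commutes with `m`. -/
lemma step_comm {K A : Type*} [CommRing K] [Ring A] [Algebra K A] (t : K) (x e m : A)
    (h1 : x * m = m * x) (h2 : e * m = m * e) :
    (x * e - t • (e * x)) * m = m * (x * e - t • (e * x)) := by
  linear_combination (norm := skip)
    x * h2 + h1 * e - t • (e * h1) - t • (h2 * x)
  simp only [smul_sub, smul_add, smul_neg, smul_smul, sub_mul,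
    mul_sub, add_mul, mul_add, neg_mul, mul_neg, smul_mul_assoc, mul_smul_comm,
    sub_eq_add_neg, mul_assoc, smul_zero, zero_mul, mul_zero, add_zero, zero_add]
  match_scalars
  all_goals ring

/-- The (q-scaled) Serre relation for `(x,e)` gives `t • (x * [x,e]_t) = [x,e]_t * x`. -/
lemma step_base {K A : Type*} [CommRing K] [Ring A] [Algebra K A] (t : K) (x e : A)
    (hs : t • (x*x*e) - (t^2+1) • (x*e*x) + t • (e*x*x) = 0) :
    t • (x * (x * e - t • (e * x))) = (x * e - t • (e * x)) * x := by
  linear_combination (norm := skip) hs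
  simp only [smul_sub, smul_add, smul_neg, smul_smul, sub_mul,
    mul_sub, add_mul, mul_add, neg_mul, mul_neg, smul_mul_assoc, mul_smul_comm,
    sub_eq_add_neg, mul_assoc, smul_zero, zero_mul, mul_zero, add_zero, zero_add]
  match_scalars
  all_goals ring

/-- Inductive step for the main commutation relation. -/
lemma step_succ {K A : Type*} [CommRing K] [Ring A] [Algebra K A] (t : K) (x y g : A)
    (hg : x * g = g * x) (hih : t • (x * y) = y * x) :
    t • (x * (y * g - t • (g * y))) = (y * g - t • (g * y)) * x := by
  linear_combination (norm := skip)
    hih * g + y * hg - t^2 • (hg * y) - t • (g * hih)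
  simp only [smul_sub, smul_add, smul_neg, smul_smul, sub_mul,
    mul_sub, add_mul, mul_add, neg_mul, mul_neg, smul_mul_assoc, mul_smul_comm,
    sub_eq_add_neg, mul_assoc, smul_zero, zero_mul, mul_zero, add_zero, zero_add]
  match_scalars
  all_goals ring

/-- In `U_q(sl(n+1))`, with `X_j = [[E_1,E_2]_q,…,E_j]_q` the iterated
`q`-bracket of the positive Chevalley generators, `[X_j, X_{j+k}]_{q⁻¹} = 0`
for all positive integers `j, k` with `j + k ≤ n`. -/
theorem Xj_qinv_commute (n : ℕ) {A : Type*} [Ring A] [Algebra (RatFunc ℚ) A]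
    (E : ℕ → A)
    (hcomm : ∀ i j, 1 ≤ i → i ≤ n → 1 ≤ j → j ≤ n → (i + 2 ≤ j ∨ j + 2 ≤ i) →
      E i * E j = E j * E i)
    (hserre : ∀ i j, 1 ≤ i → i ≤ n → 1 ≤ j → j ≤ n → (i + 1 = j ∨ j + 1 = i) →
      E i * E i * E j - (q + q⁻¹) • (E i * E j * E i) + E j * E i * E i = 0)
    (X : ℕ → A) (hX1 : X 1 = E 1)
    (hX : ∀ j, 1 ≤ j → X (j + 1) = X j * E (j + 1) - q • (E (j + 1) * X j)) :
    ∀ j k, 1 ≤ j → 1 ≤ k → j + k ≤ n →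
      X j * X (j + k) - q⁻¹ • (X (j + k) * X j) = 0 := by
  -- the `q`-scaled Serre relations
  have e1 : (q : RatFunc ℚ) * (q + q⁻¹) = q^2 + 1 := by
    rw [mul_add, mul_inv_cancel₀ q_ne]
    ring
  have hqser : ∀ i j, 1 ≤ i → i ≤ n → 1 ≤ j → j ≤ n → (i + 1 = j ∨ j + 1 = i) →
      q • (E i * E i * E j) - (q^2+1) • (E i * E j * E i) + q • (E j * E i * E i) = 0 := by
    intro i j h1 h2 h3 h4 h5
    have h := hserre i j h1 h2 h3 h4 h5
    have h' := congrArg (fun z => q • z) h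
    simpa only [smul_sub, smul_add, smul_smul, e1, smul_zero] using h'
  -- `X j` commutes with `E m` for `m ≥ j + 2`
  have Hcomm : ∀ j, 1 ≤ j → ∀ m, j + 2 ≤ m → m ≤ n → X j * E m = E m * X j := by
    intro j hj
    induction j, hj using Nat.le_induction with
    | base =>
      intro m hm hmn
      rw [hX1]
      exact hcomm 1 m le_rfl (by omega) (by omega) hmn (Or.inl hm)
    | succ j hj ih =>
      intro m hm hmn
      rw [hX j hj]
      exact step_comm q (X j) (E (j+1)) (E m) (ih m (by omega) hmn)
        (hcomm (j+1) m (by omega) (by omega) (by omega) hmn (Or.inl (by omega)))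
  -- the `q`-scaled Serre relation between `X j` and `E (j+1)`
  have HS : ∀ j, 1 ≤ j → j + 1 ≤ n →
      q • (X j * X j * E (j+1)) - (q^2+1) • (X j * E (j+1) * X j)
        + q • (E (j+1) * X j * X j) = 0 := by
    intro j hj
    induction j, hj using Nat.le_induction with
    | base =>
      intro hn
      rw [hX1]
      exact hqser 1 2 le_rfl (by omega) (by omega) (by omega) (Or.inl rfl)
    | succ j hj ih =>
      intro hn
      have hc := Hcomm j hj (j+2) le_rfl (by omega)
      have hs1 := hqser (j+1) (j+2) (by omega) (by omega) (by omega) (by omega) (Or.inl rfl)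
      have hs3 := ih (by omega)
      have hkey := key_serre_gen q (X j) (E (j+1)) (E (j+2)) hc hs1 hs3
      have h2 := congrArg (fun z => ((1 + q^2 : RatFunc ℚ))⁻¹ • z) hkey
      simp only [smul_zero] at h2
      rw [smul_smul, inv_mul_cancel₀ q2_ne, one_smul] at h2
      rw [hX j hj]
      exact h2
  -- the main commutation relation, `q`-scaled
  have Hmain : ∀ j, 1 ≤ j → ∀ k, 1 ≤ k → j + k ≤ n →
      q • (X j * X (j + k)) = X (j + k) * X j := by
    intro j hj k hk
    induction k, hk using Nat.le_induction with
    | base =>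
      intro hn
      rw [hX j hj]
      exact step_base q (X j) (E (j+1)) (HS j hj hn)
    | succ k hk ih =>
      intro hn
      have hxx : X (j + (k+1)) = X (j+k) * E (j+k+1) - q • (E (j+k+1) * X (j+k)) := by
        rw [show j + (k+1) = (j+k)+1 from rfl]
        exact hX (j+k) (by omega)
      rw [hxx]
      exact step_succ q (X j) (X (j+k)) (E (j+k+1))
        (Hcomm j hj (j+k+1) (by omega) (by omega)) (ih (by omega))
  -- conclude
  intro j k hj hk hn
  have h := Hmain j hj k hk hn
  rw [← h, smul_smul, inv_mul_cancel₀ q_ne, one_smul, sub_self]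
end

section
/- In U_q(sl(n+1)), with X_j = [[E_1,E_2]_q,...,E_j]_q (iterated q-brackets of E_1,...,E_j) and D_k = [[E_n, E_{n-1}]_q, ..., E_k]_q (iterated q-brackets of E_n, E_{n-1},...,E_k), one has [X_j, D_k] = X_j D_k - D_k X_j = 0 whenever k ≤ j and j ≤ n-1, k ≥ 2 (in particular X_j and D_j commute). -/
section Generic
variable {R : Type*} [CommRing R] {A : Type*} [Ring A] [Algebra R A]

lemma gmul_mul_comm {x y a : A} (hx : x*a = a*x) (hy : y*a = a*y) :
    (x*y)*a = a*(x*y) := by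
  rw [mul_assoc, hy, ← mul_assoc, hx, mul_assoc]

lemma gbr_comm (t : R) {y b a : A} (hy : y*a = a*y) (hb : b*a = a*b) :
    (y*b - t•(b*y))*a = a*(y*b - t•(b*y)) := by
  rw [sub_mul, mul_sub, smul_mul_assoc, mul_smul_comm,
    gmul_mul_comm hy hb, gmul_mul_comm hb hy]

lemma unfoldG (t : R) {w b : A} (h : t•((w*b - t•(b*w))*b) = b*(w*b - t•(b*w))) :
    (t^2+1)•(b*w*b) - t•(w*b*b) - t•(b*b*w) = 0 := by
  have h0 : t•((w*b - t•(b*w))*b) - b*(w*b - t•(b*w)) = 0 := sub_eq_zero.mpr h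
  have key : (t^2+1)•(b*w*b) - t•(w*b*b) - t•(b*b*w)
      = -(t•((w*b - t•(b*w))*b) - b*(w*b - t•(b*w))) := by
    simp only [mul_sub, sub_mul, smul_mul_assoc, mul_smul_comm, smul_sub, smul_smul, mul_assoc]
    match_scalars <;> ring
  rw [key, h0, neg_zero]

lemma lemA2 (t : R) {b c : A}
    (hG : (t^2+1)•(c*b*c) - t•(b*c*c) - t•(c*c*b) = 0) :
    t•((b*c - t•(c*b))*c) = c*(b*c - t•(c*b)) := by
  rw [← sub_eq_zero]
  have key : t•((b*c - t•(c*b))*c) - c*(b*c - t•(c*b))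
      = -((t^2+1)•(c*b*c) - t•(b*c*c) - t•(c*c*b)) := by
    simp only [mul_sub, sub_mul, smul_mul_assoc, mul_smul_comm, smul_sub, smul_smul, mul_assoc]
    match_scalars <;> ring
  rw [key, hG, neg_zero]

lemma lemRaise (t : R) {v b c : A} (hK : v*c = c*v)
    (hG : (t^2+1)•(c*b*c) - t•(b*c*c) - t•(c*c*b) = 0) :
    t•(((v*b - t•(b*v))*c - t•(c*(v*b - t•(b*v))))*c)
      = c*((v*b - t•(b*v))*c - t•(c*(v*b - t•(b*v)))) := by
  rw [← sub_eq_zero]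
  have hK0 : v*c - c*v = 0 := sub_eq_zero.mpr hK
  have key : t•(((v*b - t•(b*v))*c - t•(c*(v*b - t•(b*v))))*c)
      - c*((v*b - t•(b*v))*c - t•(c*(v*b - t•(b*v))))
      = -(v*((t^2+1)•(c*b*c) - t•(b*c*c) - t•(c*c*b)))
        + t•(((t^2+1)•(c*b*c) - t•(b*c*c) - t•(c*c*b))*v)
        + (t^2+1)•((v*c - c*v)*(b*c))
        - t•((v*c - c*v)*(c*b))
        - (t^2)•(b*(v*c - c*v)*c)
        - t•(c*(v*c - c*v)*b)
        - (t^2)•((b*c)*(v*c - c*v))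
        + (t^3+t)•((c*b)*(v*c - c*v)) := by
    simp only [mul_sub, sub_mul, smul_mul_assoc, mul_smul_comm, smul_sub, smul_add, add_mul,
      mul_add, smul_smul, mul_assoc]
    match_scalars <;> ring
  rw [key, hG, hK0]
  simp

lemma lemB1 (t : R) {w b c : A} (hK : w*c = c*w)
    (hGw : (t^2+1)•(b*w*b) - t•(w*b*b) - t•(b*b*w) = 0)
    (hGb : (t^2+1)•(b*c*b) - t•(c*b*b) - t•(b*b*c) = 0) :
    (t^2+1)•(((w*b - t•(b*w))*c - t•(c*(w*b - t•(b*w))))*b)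
      = (t^2+1)•(b*((w*b - t•(b*w))*c - t•(c*(w*b - t•(b*w))))) := by
  rw [← sub_eq_zero, ← smul_sub]
  have hK0 : w*c - c*w = 0 := sub_eq_zero.mpr hK
  have key : (t^2+1)•((((w*b - t•(b*w))*c - t•(c*(w*b - t•(b*w))))*b)
      - (b*((w*b - t•(b*w))*c - t•(c*(w*b - t•(b*w))))))
      = w*((t^2+1)•(b*c*b) - t•(c*b*b) - t•(b*b*c))
        - ((t^2+1)•(b*w*b) - t•(w*b*b) - t•(b*b*w))*c
        + (t^2)•(c*((t^2+1)•(b*w*b) - t•(w*b*b) - t•(b*b*w)))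
        - (t^2)•(((t^2+1)•(b*c*b) - t•(c*b*b) - t•(b*b*c))*w)
        + t•((w*c - c*w)*(b*b))
        + (t^3)•((b*b)*(w*c - c*w))
        - (t^3+t)•(b*(w*c - c*w)*b) := by
    simp only [mul_sub, sub_mul, smul_mul_assoc, mul_smul_comm, smul_sub, smul_add, add_mul,
      mul_add, smul_smul, mul_assoc]
    match_scalars <;> ring
  rw [key, hGw, hGb, hK0]
  simp

lemma lemZcore (t : R) {u b y : A} (huy : u*y = y*u)
    (hGu : (t^2+1)•(b*u*b) - t•(u*b*b) - t•(b*b*u) = 0)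
    (hGy : (t^2+1)•(b*y*b) - t•(y*b*b) - t•(b*b*y) = 0)
    (hx : t•((u*b - t•(b*u))*b) = b*(u*b - t•(b*u))) :
    (t^2+1)•((u*b - t•(b*u))*(y*b - t•(b*y)))
      = (t^2+1)•((y*b - t•(b*y))*(u*b - t•(b*u))) := by
  rw [← sub_eq_zero, ← smul_sub]
  have hK0 : u*y - y*u = 0 := sub_eq_zero.mpr huy
  have hx0 : b*(u*b - t•(b*u)) - t•((u*b - t•(b*u))*b) = 0 := sub_eq_zero.mpr hx.symm
  have key : (t^2+1)•((u*b - t•(b*u))*(y*b - t•(b*y)) - (y*b - t•(b*y))*(u*b - t•(b*u)))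
      = u*((t^2+1)•(b*y*b) - t•(y*b*b) - t•(b*b*y))
        - (t^2)•(((t^2+1)•(b*y*b) - t•(y*b*b) - t•(b*b*y))*u)
        - ((t^2+1)•(b*u*b) - t•(u*b*b) - t•(b*b*u))*y
        + (t^2)•(y*((t^2+1)•(b*u*b) - t•(u*b*b) - t•(b*b*u)))
        + t•((u*y - y*u)*(b*b))
        - (t^3+t)•(b*(u*y - y*u)*b)
        + (t^3)•((b*b)*(u*y - y*u))
        + (t^2+1)•((b*(u*b - t•(b*u)) - t•((u*b - t•(b*u))*b))*y)
        - (t^2+1)•(y*(b*(u*b - t•(b*u)) - t•((u*b - t•(b*u))*b))) := by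
    simp only [mul_sub, sub_mul, smul_mul_assoc, mul_smul_comm, smul_sub, smul_add, add_mul,
      mul_add, smul_smul, mul_assoc]
    match_scalars <;> ring
  rw [key, hGu, hGy, hK0, hx0]
  simp

end Generic

lemma q_ne_zero : q ≠ 0 := RatFunc.X_ne_zero

lemma q_sq_add_one_ne_zero : (q^2 + 1 : RatFunc ℚ) ≠ 0 := by
  have h : (q^2 + 1 : RatFunc ℚ) = algebraMap (Polynomial ℚ) (RatFunc ℚ) (Polynomial.X^2 + 1) := by
    simp [q, RatFunc.algebraMap_X, map_add, map_pow, map_one]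
  rw [h]
  intro hc
  have h2 : (Polynomial.X^2 + 1 : Polynomial ℚ) = 0 :=
    (map_eq_zero_iff _ (IsFractionRing.injective _ _)).mp hc
  have := congrArg (fun p => Polynomial.coeff p 0) h2
  simp at this

section RF
variable {A : Type*} [Ring A] [Algebra (RatFunc ℚ) A]

lemma rf_smul_cancel {r : RatFunc ℚ} (hr : r ≠ 0) {x y : A} (h : r•x = r•y) : x = y := by
  have h2 := congrArg (fun z => r⁻¹ • z) h
  simpa [smul_smul, inv_mul_cancel₀ hr] using h2

lemma clearSerre {a b : A} (h : a*a*b - (q+q⁻¹)•(a*b*a) + b*a*a = 0) :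
    (q^2+1)•(a*b*a) - q•(b*a*a) - q•(a*a*b) = 0 := by
  have hqq : q*(q+q⁻¹) = q^2+1 := by
    rw [mul_add, mul_inv_cancel₀ q_ne_zero]; ring
  have h2 := congrArg (fun z => q • z) h
  simp only [smul_sub, smul_add, smul_smul, smul_zero, hqq] at h2
  have h3 : (q^2+1)•(a*b*a) - q•(b*a*a) - q•(a*a*b)
      = -(q•(a*a*b) - (q^2+1)•(a*b*a) + q•(b*a*a)) := by abel
  rw [h3, h2, neg_zero]

end RF

/-- In `U_q(sl(n+1))`, with `X_j = [[E_1,E_2]_q,…,E_j]_q` and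
`D_k = [[E_n,E_{n-1}]_q,…,E_k]_q`, one has `[X_j, D_k] = 0` whenever
`2 ≤ k ≤ j ≤ n-1`. -/
theorem Xj_commutes_Dk (n : ℕ) {A : Type*} [Ring A] [Algebra (RatFunc ℚ) A]
    (E : ℕ → A)
    (hcomm : ∀ i j, 1 ≤ i → i ≤ n → 1 ≤ j → j ≤ n → (i + 2 ≤ j ∨ j + 2 ≤ i) →
      E i * E j = E j * E i)
    (hserre : ∀ i j, 1 ≤ i → i ≤ n → 1 ≤ j → j ≤ n → (i + 1 = j ∨ j + 1 = i) →
      E i * E i * E j - (q + q⁻¹) • (E i * E j * E i) + E j * E i * E i = 0)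
    (X : ℕ → A) (hX1 : X 1 = E 1)
    (hX : ∀ j, 1 ≤ j → X (j + 1) = X j * E (j + 1) - q • (E (j + 1) * X j))
    (D : ℕ → A) (hDn : D n = E n)
    (hD : ∀ k, 1 ≤ k → k < n → D k = D (k + 1) * E k - q • (E k * D (k + 1))) :
    ∀ j k, 2 ≤ k → k ≤ j → j ≤ n - 1 → X j * D k = D k * X j := by
  -- cleared Serre relations
  have hser : ∀ i j, 1 ≤ i → i ≤ n → 1 ≤ j → j ≤ n → (i + 1 = j ∨ j + 1 = i) →
      (q^2+1)•(E i*E j*E i) - q•(E j*E i*E i) - q•(E i*E i*E j) = 0 := by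
    intro i j h1 h2 h3 h4 h5
    exact clearSerre (hserre i j h1 h2 h3 h4 h5)
  -- X i commutes with distant E m (m ≥ i+2)
  have EX : ∀ i m, 1 ≤ i → i + 2 ≤ m → m ≤ n → X i * E m = E m * X i := by
    intro i
    induction i with
    | zero => intro m h; omega
    | succ i ih =>
      intro m h1 h2 h3
      rcases Nat.eq_zero_or_pos i with hi | hi
      · subst hi; rw [hX1]
        exact hcomm 1 m (by omega) (by omega) (by omega) (by omega) (Or.inl (by omega))
      · rw [hX i hi]
        exact gbr_comm q (ih m (by omega) (by omega) h3)
          (hcomm (i+1) m (by omega) (by omega) (by omega) (by omega) (Or.inl (by omega)))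
  -- D k commutes with distant E m (m ≤ k-2), downward induction
  have ED : ∀ i k m, k + i = n → 1 ≤ m → m + 2 ≤ k → D k * E m = E m * D k := by
    intro i
    induction i with
    | zero =>
      intro k m hk h1 h2
      have hkn : k = n := by omega
      subst hkn
      rw [hDn]
      exact hcomm k m (by omega) (by omega) h1 (by omega) (Or.inr h2)
    | succ i ih =>
      intro k m hk h1 h2
      rw [hD k (by omega) (by omega)]
      exact gbr_comm q (ih (k+1) m (by omega) h1 (by omega))
        (hcomm k m (by omega) (by omega) h1 (by omega) (Or.inr h2))
  -- X i commutes with D k for k ≥ i+2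
  have XD : ∀ i k, 1 ≤ i → i + 2 ≤ k → k ≤ n → X i * D k = D k * X i := by
    intro i
    induction i with
    | zero => intro k h; omega
    | succ i ih =>
      intro k h1 h2 h3
      rcases Nat.eq_zero_or_pos i with hi | hi
      · subst hi; rw [hX1]
        exact (ED (n-k) k 1 (by omega) (by omega) (by omega)).symm
      · rw [hX i hi]
        exact gbr_comm q (ih k (by omega) (by omega) h3)
          ((ED (n-k) k (i+1) (by omega) (by omega) (by omega)).symm)
  -- A_j : q-commutation of X j with E j
  have Aj : ∀ j, 2 ≤ j → j ≤ n → q•(X j * E j) = E j * X j := by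
    intro j h2 hn
    rcases Nat.lt_or_ge j 3 with h3 | h3
    · have hj : j = 2 := by omega
      subst hj
      have eX2 : X 2 = X 1 * E 2 - q•(E 2 * X 1) := hX 1 le_rfl
      rw [eX2, hX1]
      exact lemA2 q (hser 2 1 (by omega) (by omega) (by omega) (by omega) (Or.inr rfl))
    · obtain ⟨i, rfl⟩ : ∃ i, j = i + 3 := ⟨j - 3, by omega⟩
      have eX3 : X (i+3) = X (i+2) * E (i+3) - q•(E (i+3) * X (i+2)) := by
        have h := hX (i+2) (by omega); rwa [show i+2+1 = i+3 from rfl] at h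
      have eX2 : X (i+2) = X (i+1) * E (i+2) - q•(E (i+2) * X (i+1)) := by
        have h := hX (i+1) (by omega); rwa [show i+1+1 = i+2 from rfl] at h
      rw [eX3, eX2]
      exact lemRaise q (EX (i+1) (i+3) (by omega) (by omega) (by omega))
        (hser (i+3) (i+2) (by omega) (by omega) (by omega) (by omega) (Or.inr rfl))
  -- A'_k : q-commutation of D k with E k
  have A' : ∀ k, 1 ≤ k → k + 1 ≤ n → q•(D k * E k) = E k * D k := by
    intro k h1 h2
    rcases Nat.lt_or_ge (k+1) n with hlt | hge
    · have eD1 : D (k+1) = D (k+2) * E (k+1) - q•(E (k+1) * D (k+2)) := by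
        have h := hD (k+1) (by omega) (by omega); rwa [show k+1+1 = k+2 from rfl] at h
      have eD0 : D k = D (k+1) * E k - q•(E k * D (k+1)) := hD k h1 (by omega)
      rw [eD0, eD1]
      exact lemRaise q (ED (n-(k+2)) (k+2) k (by omega) h1 (by omega))
        (hser k (k+1) (by omega) (by omega) (by omega) (by omega) (Or.inl rfl))
    · have hk : k + 1 = n := by omega
      have eD0 : D k = D (k+1) * E k - q•(E k * D (k+1)) := hD k h1 (by omega)
      have eDn1 : D (k+1) = E n := by rw [hk, hDn]
      rw [eD0, eDn1]
      exact lemA2 q (hser k n h1 (by omega) (by omega) (by omega) (Or.inl hk))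
  -- B : X j commutes with interior E m (2 ≤ m < j)
  have B : ∀ m, 2 ≤ m → ∀ j, m + 1 ≤ j → j ≤ n → X j * E m = E m * X j := by
    intro m hm j hj
    induction j, hj using Nat.le_induction with
    | base =>
      intro hn
      obtain ⟨i, rfl⟩ : ∃ i, m = i + 2 := ⟨m - 2, by omega⟩
      have eX3 : X (i+3) = X (i+2) * E (i+3) - q•(E (i+3) * X (i+2)) := by
        have h := hX (i+2) (by omega); rwa [show i+2+1 = i+3 from rfl] at h
      have eX2 : X (i+2) = X (i+1) * E (i+2) - q•(E (i+2) * X (i+1)) := by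
        have h := hX (i+1) (by omega); rwa [show i+1+1 = i+2 from rfl] at h
      have hA := Aj (i+2) (by omega) (by omega)
      rw [eX2] at hA
      have hGw := unfoldG q hA
      rw [show i+2+1 = i+3 from rfl, eX3, eX2]
      refine rf_smul_cancel q_sq_add_one_ne_zero ?_
      exact lemB1 q (EX (i+1) (i+3) (by omega) (by omega) (by omega)) hGw
        (hser (i+2) (i+3) (by omega) (by omega) (by omega) (by omega) (Or.inl rfl))
    | succ j hj ih =>
      intro hn
      rw [hX j (by omega)]
      exact gbr_comm q (ih (by omega))
        (hcomm (j+1) m (by omega) (by omega) (by omega) (by omega) (Or.inr (by omega)))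
  -- core case : X j commutes with D j
  have core : ∀ j, 2 ≤ j → j + 1 ≤ n → X j * D j = D j * X j := by
    intro j h2 hn
    obtain ⟨i, rfl⟩ : ∃ i, j = i + 2 := ⟨j - 2, by omega⟩
    have eX2 : X (i+2) = X (i+1) * E (i+2) - q•(E (i+2) * X (i+1)) := by
      have h := hX (i+1) (by omega); rwa [show i+1+1 = i+2 from rfl] at h
    have eD : D (i+2) = D (i+3) * E (i+2) - q•(E (i+2) * D (i+3)) := by
      have h := hD (i+2) (by omega) (by omega); rwa [show i+2+1 = i+3 from rfl] at h
    have hA := Aj (i+2) (by omega) (by omega)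
    rw [eX2] at hA
    have hGu := unfoldG q hA
    have hA' := A' (i+2) (by omega) (by omega)
    rw [eD] at hA'
    have hGy := unfoldG q hA'
    have huy := XD (i+1) (i+3) (by omega) (by omega) (by omega)
    rw [eX2, eD]
    exact rf_smul_cancel q_sq_add_one_ne_zero (lemZcore q huy hGu hGy hA)
  -- main statement, downward induction on k
  suffices H : ∀ d k, 2 ≤ k → k + d + 1 ≤ n → X (k+d) * D k = D k * X (k+d) by
    intro j k hk2 hkj hjn
    have h := H (j - k) k hk2 (by omega)
    rwa [show k + (j-k) = j by omega] at h
  intro d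
  induction d with
  | zero =>
    intro k h2 hn
    rw [Nat.add_zero]
    exact core k h2 (by omega)
  | succ d ih =>
    intro k h2 hn
    rw [hD k (by omega) (by omega)]
    have h1 := ih (k+1) (by omega) (by omega)
    rw [show (k+1) + d = k + (d+1) from by omega] at h1
    exact (gbr_comm q h1.symm ((B k h2 (k+(d+1)) (by omega) (by omega)).symm)).symm
end

section
/- In U_q(sl(n+1)), with X_j and D_k as iterated q-brackets, if k ≥ j + 2 then X_j and D_k commute: X_j D_k = D_k X_j. -/
/-- In `U_q(sl(n+1))`, with `X_j` and `D_k` the iterated `q`-brackets,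
if `k ≥ j + 2` then `X_j` and `D_k` commute. -/
theorem Xj_commutes_Dk_far (n : ℕ) {A : Type*} [Ring A] [Algebra (RatFunc ℚ) A]
    (E : ℕ → A)
    (hcomm : ∀ i j, 1 ≤ i → i ≤ n → 1 ≤ j → j ≤ n → (i + 2 ≤ j ∨ j + 2 ≤ i) →
      E i * E j = E j * E i)
    (hserre : ∀ i j, 1 ≤ i → i ≤ n → 1 ≤ j → j ≤ n → (i + 1 = j ∨ j + 1 = i) →
      E i * E i * E j - (q + q⁻¹) • (E i * E j * E i) + E j * E i * E i = 0)
    (X : ℕ → A) (hX1 : X 1 = E 1)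
    (hX : ∀ j, 1 ≤ j → X (j + 1) = X j * E (j + 1) - q • (E (j + 1) * X j))
    (D : ℕ → A) (hDn : D n = E n)
    (hD : ∀ k, 1 ≤ k → k < n → D k = D (k + 1) * E k - q • (E k * D (k + 1))) :
    ∀ j k, 1 ≤ j → k ≤ n → j + 2 ≤ k → X j * D k = D k * X j := by
  -- X j commutes with E m when m ≥ j + 2
  have key : ∀ (Y a b : A), Y * a = a * Y → Y * b = b * Y →
      Y * (a * b - q • (b * a)) = (a * b - q • (b * a)) * Y := by
    intro Y a b ha hb
    have e1 : Y * (a * b) = a * b * Y := by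
      rw [← mul_assoc, ha, mul_assoc, hb, ← mul_assoc]
    have e2 : Y * (b * a) = b * a * Y := by
      rw [← mul_assoc, hb, mul_assoc, ha, ← mul_assoc]
    rw [mul_sub, sub_mul, mul_smul_comm, smul_mul_assoc, e1, e2]
  have hXE : ∀ j m, 1 ≤ j → j + 2 ≤ m → m ≤ n → X j * E m = E m * X j := by
    intro j
    induction j with
    | zero => intro m h; omega
    | succ j ih =>
      intro m h1 h2 h3
      rcases Nat.eq_zero_or_pos j with hj0 | hj1
      · subst hj0
        rw [hX1]
        exact hcomm 1 m (by omega) (by omega) (by omega) h3 (Or.inl (by omega))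
      · rw [hX j hj1]
        have hcjm : X j * E m = E m * X j := ih m hj1 (by omega) h3
        have hEjm : E (j + 1) * E m = E m * E (j + 1) :=
          hcomm (j + 1) m (by omega) (by omega) (by omega) h3 (Or.inl (by omega))
        exact (key (E m) (X j) (E (j + 1)) hcjm.symm hEjm.symm).symm
  intro j k hj hk hjk
  -- downward induction on k via d = n - k
  have main : ∀ d k, n - k = d → k ≤ n → j + 2 ≤ k → X j * D k = D k * X j := by
    intro d
    induction d with
    | zero =>
      intro k hd hkn hjk
      have hkeq : k = n := by omega
      rw [hkeq, hDn]
      exact hXE j n hj (by omega) le_rfl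
    | succ d ih =>
      intro k hd hkn hjk
      have hkn' : k < n := by omega
      rw [hD k (by omega) hkn']
      have h1 : X j * D (k + 1) = D (k + 1) * X j := ih (k + 1) (by omega) (by omega) (by omega)
      have h2 : X j * E k = E k * X j := hXE j k hj hjk (by omega)
      exact key (X j) (D (k + 1)) (E k) h1 h2
  exact main (n - k) k rfl hk hjk
end

section
/- In U_q(sl(n+1)) with comultiplication Δ(E_i) = E_i ⊗ K_i + 1 ⊗ E_i and Δ(K_i) = K_i ⊗ K_i, the iterated q-bracket X_i = [[E_1,E_2]_q,...,E_i]_q satisfies Δ(X_i) = 1 ⊗ X_i + Σ_{m=1}^{i-1} X_m ⊗ [[K_1···K_m, E_{m+1}]_q, ..., E_i]_q + X_i ⊗ K_1···K_i, where X_1 = E_1. -/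
open Finset TensorProduct

/-!
Since `Δ` is an algebra map, `Δ X_{i+1} = [Δ X_i, E_{i+1} ⊗ K_{i+1} + 1 ⊗ E_{i+1}]_q`, so one
inducts on `i`. With `e = E_{i+1}`, `k = K_{i+1}`, bracketing `a ⊗ b` with `e ⊗ k + 1 ⊗ e` gives
`a ⊗ [b, e]_q + (a e ⊗ b k - q · e a ⊗ k b)`. The correction vanishes for `1 ⊗ X_i` and
`X_m ⊗ Y_{m,i}`, `m < i`: there `e` commutes with `a` (as `E_{i+1}` commutes with `E_1, …, E_{m+1}`)
and `q k b = b k` (as `k` commutes with the `K`'s and `E_1, …, E_{i-1}`, while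
`K_{i+1} E_i = q⁻¹ E_i K_{i+1}`). For `X_i ⊗ K_1⋯K_i` the element `k` commutes with `b`, and the
correction is `X_{i+1} ⊗ K_1⋯K_{i+1}`; the remaining `X_i ⊗ [K_1⋯K_i, E_{i+1}]_q` is the new
summand `m = i`.
-/

section QBracket

variable {R B C : Type*} [CommRing R] [Ring B] [Algebra R B] [Ring C] [Algebra R C]

def qBracket (c : R) (a b : B) : B := a * b - c • (b * a)

lemma qBracket_add_left (c : R) (a a' b : B) :
    qBracket c (a + a') b = qBracket c a b + qBracket c a' b := by
  simp only [qBracket, add_mul, mul_add, smul_add]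
  abel

lemma qBracket_sum_left {ι : Type*} (c : R) (s : Finset ι) (f : ι → B) (b : B) :
    qBracket c (∑ i ∈ s, f i) b = ∑ i ∈ s, qBracket c (f i) b := by
  simp only [qBracket, sum_mul, mul_sum, smul_sum, sum_sub_distrib]

lemma AlgHom.map_qBracket (f : B →ₐ[R] C) (c : R) (a b : B) :
    f (qBracket c a b) = qBracket c (f a) (f b) := by
  simp only [qBracket, map_sub, map_smul, map_mul]

lemma Commute.qBracket_right {k z e : B} (hz : Commute k z) (he : Commute k e) (c : R) :
    Commute k (qBracket c z e) :=
  (hz.mul_right he).sub_right ((he.mul_right hz).smul_right c)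

lemma smul_mul_qBracket_of_commute {k z e : B} {β : R} (c : R) (hz : Commute k z)
    (he : β • (k * e) = e * k) : β • (k * qBracket c z e) = qBracket c z e * k := by
  simp only [qBracket, mul_sub, sub_mul, smul_sub, mul_smul_comm, smul_mul_assoc, smul_comm β c]
  rw [← mul_assoc, hz.eq, mul_assoc, ← mul_smul_comm, he, ← mul_assoc, ← mul_assoc,
    ← smul_mul_assoc, he, mul_assoc, mul_assoc, hz.eq, mul_assoc]

def IsQBracketChain (c : R) (e : ℕ → B) (m : ℕ) (z : ℕ → B) : Prop :=
  ∀ j, m ≤ j → z (j + 1) = qBracket c (z j) (e (j + 1))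

lemma IsQBracketChain.commute {c : R} {e z : ℕ → B} {m l : ℕ} {k : B}
    (hz : IsQBracketChain c e m z) (hm : Commute k (z m))
    (he : ∀ j, m < j → j ≤ l → Commute k (e j)) (hml : m ≤ l) : Commute k (z l) := by
  induction l, hml using Nat.le_induction with
  | base => exact hm
  | succ l hml ih =>
    rw [hz l hml]
    exact (ih fun j hj hjl => he j hj (by omega)).qBracket_right (he (l + 1) (by omega) le_rfl) c

lemma qBracket_tmul_skewPrimitive (c : R) (a b e k : B) :
    qBracket c (a ⊗ₜ[R] b) (e ⊗ₜ[R] k + 1 ⊗ₜ[R] e) =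
      ((a * e) ⊗ₜ[R] (b * k) - c • ((e * a) ⊗ₜ[R] (k * b))) + a ⊗ₜ[R] qBracket c b e := by
  simp only [qBracket, mul_add, add_mul, Algebra.TensorProduct.tmul_mul_tmul, one_mul, mul_one,
    tmul_sub, tmul_smul, smul_add]
  abel

lemma qBracket_tmul_skewPrimitive_of_commute (c : R) {a b e k : B} (hae : Commute a e)
    (hkb : c • (k * b) = b * k) :
    qBracket c (a ⊗ₜ[R] b) (e ⊗ₜ[R] k + 1 ⊗ₜ[R] e) = a ⊗ₜ[R] qBracket c b e := by
  rw [qBracket_tmul_skewPrimitive, ← tmul_smul, hkb, hae.eq, sub_self, zero_add]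

lemma qBracket_tmul_skewPrimitive_of_commute_right (c : R) {a b e k : B} (hkb : Commute k b) :
    qBracket c (a ⊗ₜ[R] b) (e ⊗ₜ[R] k + 1 ⊗ₜ[R] e) =
      qBracket c a e ⊗ₜ[R] (b * k) + a ⊗ₜ[R] qBracket c b e := by
  rw [qBracket_tmul_skewPrimitive, hkb.eq, smul_tmul', ← sub_tmul]; rfl

lemma qBracket_one_tmul_add_sum_tmul_add_tmul {ι : Type*} (c : R) (s : Finset ι) (a b : ι → B)
    {x p e k : B}
    (hkx : c • (k * x) = x * k) (hae : ∀ m ∈ s, Commute (a m) e)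
    (hkb : ∀ m ∈ s, c • (k * b m) = b m * k) (hkp : Commute k p) :
    qBracket c (1 ⊗ₜ[R] x + ∑ m ∈ s, a m ⊗ₜ[R] b m + x ⊗ₜ[R] p) (e ⊗ₜ[R] k + 1 ⊗ₜ[R] e) =
      1 ⊗ₜ[R] qBracket c x e + ∑ m ∈ s, a m ⊗ₜ[R] qBracket c (b m) e +
        x ⊗ₜ[R] qBracket c p e + qBracket c x e ⊗ₜ[R] (p * k) := by
  rw [qBracket_add_left, qBracket_add_left, qBracket_sum_left,
    qBracket_tmul_skewPrimitive_of_commute c (Commute.one_left e) hkx,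
    qBracket_tmul_skewPrimitive_of_commute_right c hkp,
    sum_congr rfl fun m hm => qBracket_tmul_skewPrimitive_of_commute c (hae m hm) (hkb m hm)]
  abel

lemma IsQBracketChain.smul_mul_eq_mul_of_lt {c : R} {E K z : ℕ → B} {n m i : ℕ}
    (hKE_far : ∀ r j, 1 ≤ j → j + 2 ≤ r → r ≤ n → Commute (K r) (E j))
    (hKE_adj : ∀ j, 1 ≤ j → j + 1 ≤ n → c • (K (j + 1) * E j) = E j * K (j + 1))
    (hz : IsQBracketChain c E m z) (hzm : Commute (K (i + 1)) (z m)) (hmi : m < i)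
    (hi : i + 1 ≤ n) : c • (K (i + 1) * z i) = z i * K (i + 1) := by
  obtain ⟨l, rfl⟩ : ∃ l, i = l + 1 := ⟨i - 1, by omega⟩
  rw [hz l (by omega)]
  refine smul_mul_qBracket_of_commute c (hz.commute hzm ?_ (by omega))
    (hKE_adj (l + 1) (by omega) hi)
  exact fun j hj hjl => hKE_far (l + 2) j (by omega) (by omega) hi

theorem comul_eq_of_isQBracketChain (Δ : B →ₐ[R] B ⊗[R] B) {n : ℕ} {c : R}
    {E K X P : ℕ → B} {Y : ℕ → ℕ → B}
    (hEE : ∀ r j, 1 ≤ j → j + 2 ≤ r → r ≤ n → Commute (E r) (E j))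
    (hKE_far : ∀ r j, 1 ≤ j → j + 2 ≤ r → r ≤ n → Commute (K r) (E j))
    (hKE_adj : ∀ j, 1 ≤ j → j + 1 ≤ n → c • (K (j + 1) * E j) = E j * K (j + 1))
    (hKP : ∀ m r, m < r → Commute (K r) (P m)) (hP0 : P 0 = 1)
    (hP : ∀ i, P (i + 1) = P i * K (i + 1))
    (hΔE : ∀ i, 1 ≤ i → i ≤ n → Δ (E i) = E i ⊗ₜ[R] K i + 1 ⊗ₜ[R] E i)
    (hX1 : X 1 = E 1) (hX : IsQBracketChain c E 1 X)
    (hY : ∀ m, IsQBracketChain c E m (Y m)) (hYP : ∀ m, Y m m = P m) :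
    ∀ i, i + 1 ≤ n → Δ (X (i + 1)) = 1 ⊗ₜ[R] X (i + 1) +
      ∑ m ∈ Icc 1 i, X m ⊗ₜ[R] Y m (i + 1) + X (i + 1) ⊗ₜ[R] P (i + 1) := by
  intro i
  induction i with
  | zero =>
    intro hn
    simp [hX1, hP, hP0, hΔE 1 le_rfl hn, add_comm]
  | succ i IH =>
    intro hn
    have hKX : c • (K (i + 2) * X (i + 1)) = X (i + 1) * K (i + 2) := by
      rcases i with _ | l
      · exact hX1 ▸ hKE_adj 1 le_rfl hn
      · exact hX.smul_mul_eq_mul_of_lt hKE_far hKE_adj (hX1 ▸ hKE_far _ 1 le_rfl (by omega) hn)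
          (by omega) hn
    have hEX m (hm : m ∈ Icc 1 i) : Commute (X m) (E (i + 2)) := by
      rw [mem_Icc] at hm
      refine (hX.commute (hX1 ▸ hEE _ 1 le_rfl (by omega) hn) ?_ hm.1).symm
      exact fun j hj hjm => hEE _ j (by omega) (by omega) hn
    have hKY m (hm : m ∈ Icc 1 i) : c • (K (i + 2) * Y m (i + 1)) = Y m (i + 1) * K (i + 2) :=
      (hY m).smul_mul_eq_mul_of_lt hKE_far hKE_adj (hYP m ▸ hKP m _ (by simp at hm; omega))
        (by simp at hm; omega) hn
    rw [hX (i + 1) le_add_self, AlgHom.map_qBracket, IH (by omega), hΔE (i + 2) (by omega) hn,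
      qBracket_one_tmul_add_sum_tmul_add_tmul c _ _ _ hKX hEX hKY (hKP _ _ (by omega)),
      ← hX _ le_add_self, sum_Icc_succ_top (by omega), ← hP, ← hYP (i + 1), ← hY _ _ le_rfl,
      ← add_assoc]
    congr 3
    exact sum_congr rfl fun m hm => by rw [hY m (i + 1) (by simp at hm; omega)]

end QBracket

theorem comul_Xi_general (n : ℕ) {A : Type*} [Ring A] [Algebra (RatFunc ℚ) A]
    (Δ : A →ₐ[RatFunc ℚ] A ⊗[RatFunc ℚ] A) (E Kg : ℕ → A)
    (hcomm : ∀ i j, 1 ≤ i → i ≤ n → 1 ≤ j → j ≤ n → (i + 2 ≤ j ∨ j + 2 ≤ i) →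
      E i * E j = E j * E i)
    (hKK : ∀ i j, Kg i * Kg j = Kg j * Kg i)
    (hKE : ∀ i j, 1 ≤ i → i ≤ n → 1 ≤ j → j ≤ n →
      Kg i * E j =
        (q ^ (if i = j then (2 : ℤ) else if i + 1 = j ∨ j + 1 = i then -1 else 0)) •
          (E j * Kg i))
    (hΔE : ∀ i, 1 ≤ i → i ≤ n → Δ (E i) = E i ⊗ₜ[RatFunc ℚ] Kg i + 1 ⊗ₜ[RatFunc ℚ] E i)
    (X : ℕ → A) (hX1 : X 1 = E 1)
    (hX : ∀ j, 1 ≤ j → X (j + 1) = X j * E (j + 1) - q • (E (j + 1) * X j))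
    -- `Y m i = [[K_1⋯K_m, E_{m+1}]_q, …, E_i]_q`
    (Y : ℕ → ℕ → A) (hYbase : ∀ m, Y m m = (List.map Kg (List.range' 1 m)).prod)
    (hYstep : ∀ m i, m ≤ i → Y m (i + 1) = Y m i * E (i + 1) - q • (E (i + 1) * Y m i)) :
    ∀ i, 1 ≤ i → i ≤ n →
      Δ (X i) =
        1 ⊗ₜ[RatFunc ℚ] X i +
        (∑ m ∈ Icc 1 (i - 1), X m ⊗ₜ[RatFunc ℚ] Y m i) +
        X i ⊗ₜ[RatFunc ℚ] (List.map Kg (List.range' 1 i)).prod := by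
  intro i hi hin
  obtain ⟨i, rfl⟩ : ∃ j, i = j + 1 := ⟨i - 1, by omega⟩
  have hEE r j (hj : 1 ≤ j) (hjr : j + 2 ≤ r) (hr : r ≤ n) : Commute (E r) (E j) :=
    hcomm r j (by omega) hr hj (by omega) (Or.inr hjr)
  have hKE_far r j (hj : 1 ≤ j) (hjr : j + 2 ≤ r) (hr : r ≤ n) : Commute (Kg r) (E j) := by
    have h := hKE r j (by omega) hr hj (by omega)
    rwa [if_neg (by omega), if_neg (by omega), zpow_zero, one_smul] at h
  have hKE_adj j (hj : 1 ≤ j) (hjn : j + 1 ≤ n) : q • (Kg (j + 1) * E j) = E j * Kg (j + 1) := by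
    rw [hKE (j + 1) j (by omega) hjn hj (by omega), if_neg (by omega), if_pos (Or.inr rfl),
      smul_smul, zpow_neg_one, mul_inv_cancel₀ RatFunc.X_ne_zero, one_smul]
  have hKP m r (_ : m < r) : Commute (Kg r) (List.map Kg (List.range' 1 m)).prod :=
    Commute.list_prod_right _ _ fun _ hk => by
      obtain ⟨j, -, rfl⟩ := List.mem_map.mp hk
      exact hKK r j
  simpa using comul_eq_of_isQBracketChain Δ hEE hKE_far hKE_adj hKP rfl
    (fun i => by simp [List.range'_concat, add_comm]) hΔE hX1 hX hYstep hYbase i hin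

/-- In `U_q(sl(n+1))` with `Δ(E_i) = E_i ⊗ K_i + 1 ⊗ E_i` and
`Δ(K_i) = K_i ⊗ K_i`, the iterated `q`-bracket `X_i = [[E_1,E_2]_q,…,E_i]_q`
satisfies
`Δ(X_i) = 1 ⊗ X_i + Σ_{m=1}^{i-1} X_m ⊗ [[K_1⋯K_m, E_{m+1}]_q,…,E_i]_q + X_i ⊗ K_1⋯K_i`. -/
theorem comul_Xi (n : ℕ) {A : Type*} [Ring A] [Algebra (RatFunc ℚ) A]
    (Δ : A →ₐ[RatFunc ℚ] A ⊗[RatFunc ℚ] A) (E Kg : ℕ → A)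
    (hcomm : ∀ i j, 1 ≤ i → i ≤ n → 1 ≤ j → j ≤ n → (i + 2 ≤ j ∨ j + 2 ≤ i) →
      E i * E j = E j * E i)
    (hserre : ∀ i j, 1 ≤ i → i ≤ n → 1 ≤ j → j ≤ n → (i + 1 = j ∨ j + 1 = i) →
      E i * E i * E j - (q + q⁻¹) • (E i * E j * E i) + E j * E i * E i = 0)
    (hKK : ∀ i j, Kg i * Kg j = Kg j * Kg i)
    (hKE : ∀ i j, 1 ≤ i → i ≤ n → 1 ≤ j → j ≤ n →
      Kg i * E j =
        (q ^ (if i = j then (2 : ℤ) else if i + 1 = j ∨ j + 1 = i then -1 else 0)) •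
          (E j * Kg i))
    (hΔE : ∀ i, 1 ≤ i → i ≤ n → Δ (E i) = E i ⊗ₜ[RatFunc ℚ] Kg i + 1 ⊗ₜ[RatFunc ℚ] E i)
    (hΔK : ∀ i, 1 ≤ i → i ≤ n → Δ (Kg i) = Kg i ⊗ₜ[RatFunc ℚ] Kg i)
    (X : ℕ → A) (hX1 : X 1 = E 1)
    (hX : ∀ j, 1 ≤ j → X (j + 1) = X j * E (j + 1) - q • (E (j + 1) * X j))
    -- `Y m i = [[K_1⋯K_m, E_{m+1}]_q, …, E_i]_q`
    (Y : ℕ → ℕ → A) (hYbase : ∀ m, Y m m = (List.map Kg (List.range' 1 m)).prod)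
    (hYstep : ∀ m i, m ≤ i → Y m (i + 1) = Y m i * E (i + 1) - q • (E (i + 1) * Y m i)) :
    ∀ i, 1 ≤ i → i ≤ n →
      Δ (X i) =
        1 ⊗ₜ[RatFunc ℚ] X i +
        (∑ m ∈ Icc 1 (i - 1), X m ⊗ₜ[RatFunc ℚ] Y m i) +
        X i ⊗ₜ[RatFunc ℚ] (List.map Kg (List.range' 1 i)).prod :=
  comul_Xi_general n Δ E Kg hcomm hKK hKE hΔE X hX1 hX Y hYbase hYstep
end

section
/- Let A, B, C be elements of an associative algebra over the field Q(q) such that: [A,[A,[A,B]_{q^2}]]_{q^{-2}} = 0, [A,[A,[A,C]_{q^2}]]_{q^{-2}} = 0, and [B,[A,C]_{q^2}] = 0 (ordinary commutator). Then [[A,[A,B]_{q^2}], [A,[A,C]_{q^2}]]_{q^{-2}} = 0, where [X,Y]_{q^a} := XY - q^a YX and [X,Y] := XY - YX. -/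
/-- The `q`-bracket `[x,y]_{q^a} = xy - q^a yx`; `a = 0` gives the commutator. -/
noncomputable def qbr {S : Type*} [Ring S] [Algebra (RatFunc ℚ) S]
    (a : ℤ) (x y : S) : S := x * y - (q ^ a) • (y * x)

set_option maxHeartbeats 3000000 in
/-- The key certificate identity, over an arbitrary commutative scalar ring. -/
theorem key_certificate {R S : Type*} [CommRing R] [Ring S] [Algebra R S]
    (u : R) (A B C : S) :
    (1 + u + u ^ 2) •
        (u • ((A * (A * B - u • (B * A)) - (A * B - u • (B * A)) * A) *
              (A * (A * C - u • (C * A)) - (A * C - u • (C * A)) * A)) -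
          (A * (A * C - u • (C * A)) - (A * C - u • (C * A)) * A) *
              (A * (A * B - u • (B * A)) - (A * B - u • (B * A)) * A)) =
      (-u) • ((u • (A * (A * (A * B - u • (B * A)) - (A * B - u • (B * A)) * A)) -
          (A * (A * B - u • (B * A)) - (A * B - u • (B * A)) * A) * A) * (A * C))
      + (u ^ 2) • ((u • (A * (A * (A * B - u • (B * A)) - (A * B - u • (B * A)) * A)) -
          (A * (A * B - u • (B * A)) - (A * B - u • (B * A)) * A) * A) * (C * A))
      + u • ((A * C) * (u • (A * (A * (A * B - u • (B * A)) - (A * B - u • (B * A)) * A)) -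
          (A * (A * B - u • (B * A)) - (A * B - u • (B * A)) * A) * A))
      + (-(u ^ 2)) • ((C * A) * (u • (A * (A * (A * B - u • (B * A)) - (A * B - u • (B * A)) * A)) -
          (A * (A * B - u • (B * A)) - (A * B - u • (B * A)) * A) * A))
      + (1 + u) • ((u • (A * (A * (A * C - u • (C * A)) - (A * C - u • (C * A)) * A)) -
          (A * (A * C - u • (C * A)) - (A * C - u • (C * A)) * A) * A) * (A * B))
      + (-(1 + u + u ^ 2)) • ((u • (A * (A * (A * C - u • (C * A)) - (A * C - u • (C * A)) * A)) -
          (A * (A * C - u • (C * A)) - (A * C - u • (C * A)) * A) * A) * (B * A))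
      + u • (A * (u • (A * (A * (A * C - u • (C * A)) - (A * C - u • (C * A)) * A)) -
          (A * (A * C - u • (C * A)) - (A * C - u • (C * A)) * A) * A) * B)
      + (u ^ 2) • (B * (u • (A * (A * (A * C - u • (C * A)) - (A * C - u • (C * A)) * A)) -
          (A * (A * C - u • (C * A)) - (A * C - u • (C * A)) * A) * A) * A)
      + (-(u * (1 + u + u ^ 2))) • ((A * B) * (u • (A * (A * (A * C - u • (C * A)) - (A * C - u • (C * A)) * A)) -
          (A * (A * C - u • (C * A)) - (A * C - u • (C * A)) * A) * A))
      + (u ^ 2 * (1 + u)) • ((B * A) * (u • (A * (A * (A * C - u • (C * A)) - (A * C - u • (C * A)) * A)) -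
          (A * (A * C - u • (C * A)) - (A * C - u • (C * A)) * A) * A))
      + (-(u ^ 2)) • ((B * (A * C - u • (C * A)) - (A * C - u • (C * A)) * B) * (A * A * A))
      + (u * (1 + u + u ^ 2)) • (A * (B * (A * C - u • (C * A)) - (A * C - u • (C * A)) * B) * (A * A))
      + (-(u * (1 + u + u ^ 2))) • ((A * A) * (B * (A * C - u • (C * A)) - (A * C - u • (C * A)) * B) * A)
      + (u ^ 2) • ((A * A * A) * (B * (A * C - u • (C * A)) - (A * C - u • (C * A)) * B)) := by
  simp only [mul_sub, sub_mul, mul_add, add_mul, smul_sub, smul_add,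
    smul_mul_assoc, mul_smul_comm, smul_smul, mul_assoc]
  module

set_option maxHeartbeats 2000000 in
/-- If `[A,[A,[A,B]_{q^2}]]_{q^{-2}} = 0`,
`[A,[A,[A,C]_{q^2}]]_{q^{-2}} = 0` and `[B,[A,C]_{q^2}] = 0`, then
`[[A,[A,B]_{q^2}], [A,[A,C]_{q^2}]]_{q^{-2}} = 0`. -/
theorem nested_serre_bracket_vanish {S : Type*} [Ring S] [Algebra (RatFunc ℚ) S]
    (A B C : S)
    (hRB : qbr (-2) A (qbr 0 A (qbr 2 A B)) = 0)
    (hRC : qbr (-2) A (qbr 0 A (qbr 2 A C)) = 0)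
    (hRBAC : qbr 0 B (qbr 2 A C) = 0) :
    qbr (-2) (qbr 0 A (qbr 2 A B)) (qbr 0 A (qbr 2 A C)) = 0 := by
  have hq : (q : RatFunc ℚ) ≠ 0 := RatFunc.X_ne_zero
  simp only [qbr, zpow_neg, zpow_ofNat, zpow_zero, pow_zero, one_smul] at hRB hRC hRBAC ⊢
  have key := key_certificate (q ^ 2) A B C
  set u : RatFunc ℚ := q ^ 2 with hu_def
  have hu : u ≠ 0 := pow_ne_zero _ hq
  set β : S := A * B - u • (B * A) with hβ
  set γ : S := A * C - u • (C * A) with hγ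
  set aB : S := A * β - β * A with haB
  set aC : S := A * γ - γ * A with haC
  -- scaled versions of the hypotheses
  have zB : u • (A * aB) - aB * A = 0 := by
    rw [sub_eq_zero] at hRB ⊢
    rw [hRB, smul_smul, mul_inv_cancel₀ hu, one_smul]
  have zC : u • (A * aC) - aC * A = 0 := by
    rw [sub_eq_zero] at hRC ⊢
    rw [hRC, smul_smul, mul_inv_cancel₀ hu, one_smul]
  rw [zB, zC, hRBAC] at key
  simp only [zero_mul, mul_zero, smul_zero, add_zero, zero_add] at key
  have h0 : u • (aB * aC) - aC * aB = 0 := by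
    have hd : (1 + u + u ^ 2 : RatFunc ℚ) ≠ 0 := by
      have hrepr : (1 + u + u ^ 2 : RatFunc ℚ) =
          algebraMap (Polynomial ℚ) (RatFunc ℚ)
            (1 + Polynomial.X ^ 2 + Polynomial.X ^ 4) := by
        have hx : (q : RatFunc ℚ) = algebraMap (Polynomial ℚ) (RatFunc ℚ) Polynomial.X :=
          RatFunc.algebraMap_X.symm
        simp only [hu_def, hx, map_add, map_pow, map_one]
        ring
      rw [hrepr]
      apply RatFunc.algebraMap_ne_zero
      intro h
      have := congrArg (Polynomial.eval 0) h
      simp at this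
    calc u • (aB * aC) - aC * aB
        = (1 + u + u ^ 2)⁻¹ • ((1 + u + u ^ 2) • (u • (aB * aC) - aC * aB)) := by
          rw [smul_smul, inv_mul_cancel₀ hd, one_smul]
      _ = 0 := by rw [key, smul_zero]
  rw [sub_eq_zero] at h0 ⊢
  rw [← h0, smul_smul, inv_mul_cancel₀ hu, one_smul]
end
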